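/- Let E be a closed subset of the unit circle with zero Lebesgue measure and finite entropy, let G be the family of maximal dyadic arcs J with 2J ⊂ T \ E, and let F be the family of dyadic arcs of T which are not contained in any arc of G. Then Σ_{J ∈ F} |J| < ∞. -/

import Mathlib

/-!
Parametrise `𝕋` by `turn t = e^{2πit}`, so that dyadic arcs become dyadic intervals, and let
`B = turn⁻¹' E`: a closed, `1`-periodic, null subset of `ℝ`. A dyadic arc `J` of generation `n`
that lies in no maximal good arc is not good, so `2J` meets `E` and `J` lies within `2 · 2⁻ⁿ` of
`B`. Hence the bad arcs of generation `n` have total length at most the measure of the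
`2 · 2⁻ⁿ`-neighbourhood of `B` in `(0, 1]`, which, `B` being null, is at most
`Σ_I min (|I|, 4 · 2⁻ⁿ)` over the gaps `I` of `B`. Summed over `n`, a gap contributes
`O(|I| log (1/|I|) + |I|)`, and the gaps project onto the components of `𝕋 \ E`, at most two to
one, so the finite entropy of `E` bounds the total.
-/

open Complex MeasureTheory Set Filter Topology
open scoped ENNReal NNReal Real

noncomputable section

namespace WEPPaper

/-- The open unit disc `𝔻` in `ℂ`. -/
def disc : Set ℂ := {z : ℂ | ‖z‖ < 1}

/-- The unit circle `𝕋` in `ℂ`. -/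
def circleSet : Set ℂ := {z : ℂ | ‖z‖ = 1}

/-- The point of the unit circle at angle `θ`. -/
def ePt (θ : ℝ) : ℂ := Complex.exp ((θ : ℂ) * Complex.I)

/-- Normalised arclength measure on the unit circle (total mass `1`, i.e. `|𝕋| = 1`). -/
def circleMeasure : Measure ℂ :=
  (ENNReal.ofReal (2 * Real.pi))⁻¹ •
    (volume.restrict (Set.Ico (0 : ℝ) (2 * Real.pi))).map ePt

/-- The (half-open) arc of the circle with left endpoint at angle `a` and normalised
length `t` (so angular length `2πt`). -/
def arc (a t : ℝ) : Set ℂ := ePt '' Set.Ico a (a + 2 * Real.pi * t)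

/-- The corresponding open arc. -/
def arcInt (a t : ℝ) : Set ℂ := ePt '' Set.Ioo a (a + 2 * Real.pi * t)

/-- The point `z(J) = (1 - (3/4)|J|) ξ_J` associated to the arc with left endpoint
angle `a` and normalised length `t` (its centre is at angle `a + πt`). -/
def zpt (a t : ℝ) : ℂ := ((1 : ℂ) - (3 / 4 : ℝ) * t) * ePt (a + Real.pi * t)

/-- Left endpoint angle of the dyadic arc `[2π k 2⁻ⁿ, 2π (k+1) 2⁻ⁿ)`. -/
def dyA (n k : ℕ) : ℝ := 2 * Real.pi * k * ((2 : ℝ) ^ n)⁻¹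

/-- Normalised length `2⁻ⁿ` of a dyadic arc of generation `n`. -/
def dyL (n : ℕ) : ℝ := ((2 : ℝ) ^ n)⁻¹

/-- The dyadic arc `[2π k 2⁻ⁿ, 2π (k+1) 2⁻ⁿ)` on the circle. -/
def dyadicArc (n k : ℕ) : Set ℂ := arc (dyA n k) (dyL n)

/-- The interior (relative to the circle) of the dyadic arc. -/
def dyadicArcInt (n k : ℕ) : Set ℂ := arcInt (dyA n k) (dyL n)

/-- The point `z(J)` for the dyadic arc `J` indexed by `(n, k)`. -/
def zdy (n k : ℕ) : ℂ := zpt (dyA n k) (dyL n)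

/-- Normalised length of a subset of the circle. -/
def len (S : Set ℂ) : ℝ := (circleMeasure S).toReal

/-- The collection of connected components of a subset `U` of `ℂ`. -/
def components (U : Set ℂ) : Set (Set ℂ) := {V | ∃ x ∈ U, V = connectedComponentIn U x}

/-- A closed subset `E` of the circle has finite entropy if
`Σ |J_k| log (1/|J_k|) < ∞`, the sum being over the connected components `J_k`
of `𝕋 \ E`. -/
def FiniteEntropy (E : Set ℂ) : Prop :=
  ∃ M : ℝ, ∀ F : Finset (Set ℂ), (↑F : Set (Set ℂ)) ⊆ components (circleSet \ E) →
    ∑ V ∈ F, len V * Real.log (1 / len V) ≤ M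

/-- The pseudohyperbolic distance `ρ(z,w) = |(z-w)/(1-conj w · z)|`. -/
def pdist (z w : ℂ) : ℝ := ‖(z - w) / (1 - (starRingEnd ℂ) w * z)‖

/-- The pseudohyperbolic distance from a point to a set (`⊤` for the empty set). -/
def pdistSet (z : ℂ) (S : Set ℂ) : ℝ≥0∞ := ⨅ w ∈ S, ENNReal.ofReal (pdist z w)

/-- The zero set of `f` in the unit disc. -/
def zeroSet (f : ℂ → ℂ) : Set ℂ := {z ∈ disc | f z = 0}

/-- `f ∈ H^∞`: `f` is bounded and analytic on the unit disc. -/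
def BddAnalytic (f : ℂ → ℂ) : Prop :=
  DifferentiableOn ℂ f disc ∧ ∃ M : ℝ, ∀ z ∈ disc, ‖f z‖ ≤ M

/-- `f` is an inner function: `f ∈ H^∞` and the radial limits of `|f|` equal `1`
at almost every point of the circle. -/
def IsInner (f : ℂ → ℂ) : Prop :=
  BddAnalytic f ∧
    ∀ᵐ θ ∂(volume.restrict (Set.Ico (0 : ℝ) (2 * Real.pi))),
      Tendsto (fun r : ℝ => ‖f ((r : ℂ) * ePt θ)‖)
        (𝓝[<] (1 : ℝ)) (𝓝 (1 : ℝ))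

/-- `η_f(ε) = inf {|f(z)| : ρ(z, Z(f)) > ε} > 0`. -/
def WEPAt (f : ℂ → ℂ) (ε : ℝ) : Prop :=
  ∃ η : ℝ, 0 < η ∧ ∀ z ∈ disc,
    ENNReal.ofReal ε < pdistSet z (zeroSet f) → η ≤ ‖f z‖

/-- The Weak Embedding Property. -/
def HasWEP (f : ℂ → ℂ) : Prop := ∀ ε : ℝ, 0 < ε → WEPAt f ε

/-- `f` is wepable: some multiple `f·J` of `f` by an inner function `J` has the WEP. -/
def Wepable (f : ℂ → ℂ) : Prop :=
  ∃ J : ℂ → ℂ, IsInner J ∧ HasWEP (fun z => f z * J z)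

/-- The singular inner function associated to a (positive singular) measure `μ`
on the unit circle: `S_μ(z) = exp (-∫ (w+z)/(w-z) dμ(w))`. -/
def singInner (μ : Measure ℂ) (z : ℂ) : ℂ :=
  Complex.exp (-∫ w, (w + z) / (w - z) ∂μ)

/-- The (closed) support of a measure on `ℂ`. -/
def measSupport (μ : Measure ℂ) : Set ℂ :=
  {x : ℂ | ∀ U : Set ℂ, IsOpen U → x ∈ U → μ U ≠ 0}

/-- An individual Blaschke factor with zero at `a ∈ 𝔻`. -/
def blaschkeFactor (a z : ℂ) : ℂ :=
  if a = 0 then z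
  else ((‖a‖ : ℂ) / a) * ((a - z) / (1 - (starRingEnd ℂ) a * z))

/-- A Blaschke factor, where points on the unit circle are allowed as padding and
give the constant factor `1` (this allows finite Blaschke products). -/
def bFactor (a z : ℂ) : ℂ := if ‖a‖ < 1 then blaschkeFactor a z else 1

/-- A Blaschke sequence: points of the closed disc satisfying the Blaschke condition
`Σ (1 - |a_n|) < ∞`. -/
def IsBlaschkeSeq (a : ℕ → ℂ) : Prop :=
  (∀ n, ‖a n‖ ≤ 1) ∧ Summable (fun n => 1 - ‖a n‖)

/-- `B` is the Blaschke product with zero sequence `a`. -/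
def IsBlaschkeProductWith (a : ℕ → ℂ) (B : ℂ → ℂ) : Prop :=
  IsBlaschkeSeq a ∧ ∀ z ∈ disc,
    Tendsto (fun N => ∏ n ∈ Finset.range N, bFactor (a n) z) atTop (𝓝 (B z))

/-- `B` is a Blaschke product. -/
def IsBlaschkeProduct (B : ℂ → ℂ) : Prop := ∃ a : ℕ → ℂ, IsBlaschkeProductWith a B

/-- `B` is a Blaschke product whose zero set is exactly `Λ ⊆ 𝔻`. -/
def IsBlaschkeWithZeroSet (Λ : Set ℂ) (B : ℂ → ℂ) : Prop :=
  ∃ a : ℕ → ℂ, IsBlaschkeProductWith a B ∧ Set.range a ∩ disc = Λ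

/-- `S` is easily wepable: there are `m < 1` and a Blaschke product `B` with
`Z(B) ⊆ {|S| < m}` such that `SB` has the WEP. -/
def EasilyWepable (S : ℂ → ℂ) : Prop :=
  ∃ m : ℝ, m < 1 ∧ ∃ B : ℂ → ℂ, IsBlaschkeProduct B ∧
    HasWEP (fun z => S z * B z) ∧
    zeroSet B ⊆ {z ∈ disc | ‖S z‖ < m}

/-- The Poisson integral of a finite measure `μ` on the unit circle. -/
def poisson (μ : Measure ℂ) (z : ℂ) : ℝ :=
  ∫ w, (1 - ‖z‖ ^ 2) / ‖w - z‖ ^ 2 ∂μ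

/-- `E ⊆ 𝕋` is porous with constant `C`: every arc `J` contains a subarc
`J' ⊆ J \ E` with `|J'| > C|J|`. -/
def PorousWith (C : ℝ) (E : Set ℂ) : Prop :=
  ∀ a t : ℝ, 0 < t → t ≤ 1 →
    ∃ a' t' : ℝ, 0 < t' ∧ arc a' t' ⊆ arc a t \ E ∧ C * t < t'

/-- `E ⊆ 𝕋` is porous. -/
def Porous (E : Set ℂ) : Prop := ∃ C : ℝ, 0 < C ∧ PorousWith C E

/-- `w(t) = sup { μ(J) : J ⊆ 𝕋 an arc with |J| = t }`. -/
def wSup (μ : Measure ℂ) (t : ℝ) : ℝ :=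
  sSup {x : ℝ | ∃ a : ℝ, x = (μ (arc a t)).toReal}

/-- The top half `T(J)` of the Carleson box of the dyadic arc `J` indexed by `(n,k)`. -/
def topBox (n k : ℕ) : Set ℂ :=
  {z : ℂ | ∃ r θ : ℝ, z = (r : ℂ) * ePt θ ∧ dyA n k ≤ θ ∧ θ ≤ dyA n (k + 1) ∧
    1 - dyL n ≤ r ∧ r ≤ 1 - dyL n / 2}

/-- The boundary `∂T(J)` of the top half of the Carleson box (its four sides). -/
def topBoxBoundary (n k : ℕ) : Set ℂ :=
  ((fun θ : ℝ => ((1 - dyL n : ℝ) : ℂ) * ePt θ) '' Set.Icc (dyA n k) (dyA n (k + 1))) ∪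
  ((fun θ : ℝ => ((1 - dyL n / 2 : ℝ) : ℂ) * ePt θ) '' Set.Icc (dyA n k) (dyA n (k + 1))) ∪
  ((fun r : ℝ => (r : ℂ) * ePt (dyA n k)) '' Set.Icc (1 - dyL n) (1 - dyL n / 2)) ∪
  ((fun r : ℝ => (r : ℂ) * ePt (dyA n (k + 1))) '' Set.Icc (1 - dyL n) (1 - dyL n / 2))

/-- The arclength measure `ds` on `∂T(J)`. -/
def topBoxBoundaryMeasure (n k : ℕ) : Measure ℂ :=
  ENNReal.ofReal (1 - dyL n) •
    ((volume.restrict (Set.Icc (dyA n k) (dyA n (k + 1)))).map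
      (fun θ : ℝ => ((1 - dyL n : ℝ) : ℂ) * ePt θ)) +
  ENNReal.ofReal (1 - dyL n / 2) •
    ((volume.restrict (Set.Icc (dyA n k) (dyA n (k + 1)))).map
      (fun θ : ℝ => ((1 - dyL n / 2 : ℝ) : ℂ) * ePt θ)) +
  (volume.restrict (Set.Icc (1 - dyL n) (1 - dyL n / 2))).map
    (fun r : ℝ => (r : ℂ) * ePt (dyA n k)) +
  (volume.restrict (Set.Icc (1 - dyL n) (1 - dyL n / 2))).map
    (fun r : ℝ => (r : ℂ) * ePt (dyA n (k + 1)))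

/-- `u` is harmonic on the unit disc. -/
def HarmonicOnDisc (u : ℂ → ℝ) : Prop :=
  ContDiffOn ℝ 2 u disc ∧
    ∀ z ∈ disc,
      iteratedFDeriv ℝ 2 u z ![1, 1] + iteratedFDeriv ℝ 2 u z ![Complex.I, Complex.I] = 0

/-- The arc `2J`, with the same centre as the dyadic arc `J` indexed by `(n,k)`
and twice its length. -/
def doubleArc (n k : ℕ) : Set ℂ :=
  arc (2 * Real.pi * ((k : ℝ) - 1 / 2) * ((2 : ℝ) ^ n)⁻¹) (2 * dyL n)

/-- The dyadic arcs `J` with `2J ⊆ 𝕋 \ E`. -/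
def goodDy (E : Set ℂ) : Set (ℕ × ℕ) :=
  {p : ℕ × ℕ | p.2 < 2 ^ p.1 ∧ doubleArc p.1 p.2 ⊆ circleSet \ E}

/-- The maximal dyadic arcs `J` with `2J ⊆ 𝕋 \ E`. -/
def maxGoodDy (E : Set ℂ) : Set (ℕ × ℕ) :=
  {p ∈ goodDy E | ∀ q ∈ goodDy E,
    dyadicArc p.1 p.2 ⊆ dyadicArc q.1 q.2 → dyadicArc p.1 p.2 = dyadicArc q.1 q.2}

/-- `‖f‖_{∞,n} = sup_{z ∈ 𝔻} (Σ_j |f_j(z)|²)^{1/2}` for an `n`-tuple of functions. -/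
def hinfNorm (n : ℕ) (f : Fin n → ℂ → ℂ) : ℝ≥0∞ :=
  ⨆ z ∈ disc, ENNReal.ofReal (Real.sqrt (∑ j, ‖f j z‖ ^ 2))

/-- `χ_I(f) = inf {‖g‖_{∞,n} : ∃ h ∈ H^∞, Σ g_j f_j + h I ≡ 1}`. -/
def chiC (n : ℕ) (I : ℂ → ℂ) (f : Fin n → ℂ → ℂ) : ℝ≥0∞ :=
  ⨅ g ∈ {g : Fin n → ℂ → ℂ |
      (∀ j, DifferentiableOn ℂ (g j) disc) ∧
      ∃ h : ℂ → ℂ, BddAnalytic h ∧ ∀ z ∈ disc, (∑ j, g j z * f j z) + h z * I z = 1},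
    hinfNorm n g

/-- `c_n(δ, I) = sup {χ_I(f) : δ² ≤ inf_{λ ∈ Z(I)} Σ |f_j(λ)|², ‖f‖_{∞,n} ≤ 1}`. -/
def cConst (n : ℕ) (I : ℂ → ℂ) (δ : ℝ) : ℝ≥0∞ :=
  ⨆ f ∈ {f : Fin n → ℂ → ℂ |
      (∀ j, DifferentiableOn ℂ (f j) disc) ∧ hinfNorm n f ≤ 1 ∧
      ∀ lam ∈ zeroSet I, δ ^ 2 ≤ ∑ j, ‖f j lam‖ ^ 2},
    chiC n I f

/-- `δ_n(I) = inf {δ : c_n(δ, I) < ∞}`. -/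
def deltaN (n : ℕ) (I : ℂ → ℂ) : ℝ :=
  sInf {δ : ℝ | δ ∈ Set.Ioo (0 : ℝ) 1 ∧ cConst n I δ < ⊤}

/-- `δ̃(I) = inf {ε : η_I(ε) > 0}`. -/
def tildeDelta (I : ℂ → ℂ) : ℝ :=
  sInf {ε : ℝ | 0 < ε ∧ WEPAt I ε}

/-- The atomic measure `μ = Σ_s b_s δ_{x_s}`. -/
def atomicMeasure (b : ℕ → ℝ) (x : ℕ → ℂ) : Measure ℂ :=
  Measure.sum (fun s => ENNReal.ofReal (b s) • Measure.dirac (x s))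

def turn (t : ℝ) : ℂ := ePt (2 * π * t)

lemma turn_eq_turn_iff {s t : ℝ} : turn s = turn t ↔ ∃ z : ℤ, t = s + z := by
  unfold turn ePt
  rw [Complex.exp_eq_exp_iff_exists_int]
  constructor
  · rintro ⟨n, hn⟩
    have him := congrArg Complex.im hn
    simp only [Complex.mul_im, Complex.ofReal_re, Complex.ofReal_im, Complex.I_re, Complex.I_im,
      Complex.add_im, Complex.intCast_re, Complex.intCast_im, Complex.mul_re, Complex.re_ofNat,
      Complex.im_ofNat] at him
    refine ⟨-n, mul_left_cancel₀ (by positivity : (2 * π) ≠ 0) ?_⟩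
    push_cast
    linarith
  · rintro ⟨z, rfl⟩
    exact ⟨-z, by push_cast; ring⟩

lemma turn_add_int (t : ℝ) (z : ℤ) : turn (t + z) = turn t :=
  turn_eq_turn_iff.2 ⟨-z, by push_cast; ring⟩

lemma mem_preimage_turn_add_int (E : Set ℂ) (x : ℝ) (z : ℤ) :
    x + z ∈ turn ⁻¹' E ↔ x ∈ turn ⁻¹' E := by
  simp only [mem_preimage, turn_add_int]

lemma eq_of_turn_eq {s t : ℝ} (hst : |s - t| < 1) (h : turn s = turn t) : s = t := by
  obtain ⟨z, rfl⟩ := turn_eq_turn_iff.1 h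
  have hz : |(z : ℝ)| < 1 := by simpa [abs_sub_comm] using hst
  have hz' : |z| < 1 := by exact_mod_cast hz
  simp [Int.abs_lt_one_iff.1 hz']

lemma turn_mem_circleSet (t : ℝ) : turn t ∈ circleSet := by
  simp [turn, ePt, circleSet, Complex.norm_exp]

lemma continuous_turn : Continuous turn := by
  unfold turn ePt
  fun_prop

lemma volume_inter_Ioc_eq_of_periodic {A : Set ℝ} (hA : MeasurableSet A)
    (hper : ∀ (x : ℝ) (z : ℤ), x + z ∈ A ↔ x ∈ A) (s t : ℝ) :
    volume (A ∩ Ioc s (s + 1)) = volume (A ∩ Ioc t (t + 1)) := by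
  refine (isAddFundamentalDomain_Ioc one_pos s).measure_set_eq
    (isAddFundamentalDomain_Ioc one_pos t) hA ?_
  rintro ⟨g, z, rfl⟩
  ext x
  simpa [add_comm] using hper x z

lemma circleMeasure_eq_volume_preimage_turn {S : Set ℂ} (hS : MeasurableSet S) (t : ℝ) :
    circleMeasure S = volume (turn ⁻¹' S ∩ Ioc t (t + 1)) := by
  have hePt : Measurable ePt := by unfold ePt; fun_prop
  have hpi : (0 : ℝ) < 2 * π := by positivity
  have hscale :
      turn ⁻¹' S ∩ Ico 0 1 = (fun x => 2 * π * x) ⁻¹' (ePt ⁻¹' S ∩ Ico 0 (2 * π)) := by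
    ext x
    simp only [mem_inter_iff, mem_preimage, mem_Ico, turn]
    rw [mul_nonneg_iff_of_pos_left hpi, mul_lt_iff_lt_one_right hpi]
  calc circleMeasure S
      = (ENNReal.ofReal (2 * π))⁻¹ * volume (ePt ⁻¹' S ∩ Ico 0 (2 * π)) := by
        rw [circleMeasure, Measure.smul_apply, Measure.map_apply hePt hS,
          Measure.restrict_apply (hePt hS), smul_eq_mul]
    _ = volume (turn ⁻¹' S ∩ Ico 0 1) := by
        rw [hscale, Real.volume_preimage_mul_left hpi.ne', abs_of_pos (inv_pos.2 hpi),
          ENNReal.ofReal_inv_of_pos hpi]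
    _ = volume (turn ⁻¹' S ∩ Ioc 0 (0 + 1)) := by
        rw [zero_add]
        exact measure_congr ((ae_eq_refl _).inter Ico_ae_eq_Ioc)
    _ = volume (turn ⁻¹' S ∩ Ioc t (t + 1)) :=
        volume_inter_Ioc_eq_of_periodic (continuous_turn.measurable hS)
          (mem_preimage_turn_add_int S) 0 t

lemma turn_image_Ioo (a b : ℝ) :
    turn '' Ioo a b = circleSet ∩ Complex.exp '' {w | w.im ∈ Ioo (2 * π * a) (2 * π * b)} := by
  have hpi : (0 : ℝ) < 2 * π := by positivity
  ext z
  constructor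
  · rintro ⟨s, hs, rfl⟩
    refine ⟨turn_mem_circleSet s, ((2 * π * s : ℝ) : ℂ) * Complex.I, ?_, rfl⟩
    simpa using And.intro (mul_lt_mul_of_pos_left hs.1 hpi) (mul_lt_mul_of_pos_left hs.2 hpi)
  · rintro ⟨hz, w, hw, rfl⟩
    have hre : w.re = 0 := by
      simpa [circleSet, Complex.norm_exp] using hz
    refine ⟨w.im / (2 * π), ⟨?_, ?_⟩, ?_⟩
    · rw [lt_div_iff₀' hpi]; exact hw.1
    · rw [div_lt_iff₀' hpi]; exact hw.2
    · rw [turn, ePt, mul_div_cancel₀ _ hpi.ne']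
      conv_rhs => rw [← Complex.re_add_im w, hre]
      simp

lemma isOpen_exp_image_im_mem {s : Set ℝ} (hs : IsOpen s) :
    IsOpen (Complex.exp '' {w | w.im ∈ s}) :=
  Complex.isOpenMap_exp _ (hs.preimage Complex.continuous_im)

lemma measurableSet_turn_image_Ioo (a b : ℝ) : MeasurableSet (turn '' Ioo a b) := by
  rw [turn_image_Ioo]
  exact (isClosed_eq continuous_norm continuous_const).measurableSet.inter
    (isOpen_exp_image_im_mem isOpen_Ioo).measurableSet

lemma connectedComponentIn_eq_turn_image {E : Set ℂ} {a b x : ℝ} (ha : turn a ∈ E)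
    (hb : turn b ∈ E) (hfree : ∀ t ∈ Ioo a b, turn t ∉ E) (hx : x ∈ Ioo a b) :
    connectedComponentIn (circleSet \ E) (turn x) = turn '' Ioo a b := by
  set U := Complex.exp '' {w | w.im ∈ Ioo (2 * π * a) (2 * π * b)}
  have hUcircle : circleSet ∩ U = turn '' Ioo a b := (turn_image_Ioo a b).symm
  have harc : turn '' Ioo a b ⊆ circleSet \ E := by
    rintro _ ⟨t, ht, rfl⟩
    exact ⟨turn_mem_circleSet t, hfree t ht⟩
  refine Subset.antisymm ?_ ((isPreconnected_Ioo.image _ continuous_turn.continuousOn)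
    |>.subset_connectedComponentIn (mem_image_of_mem _ hx) harc)
  -- In `𝕋 \ E` the arc is cut out both by the open set `U` and by the closed arc
  -- `turn '' Icc a b`, whose endpoints lie in `E`; so it is clopen there.
  set K := connectedComponentIn (circleSet \ E) (turn x)
  have hKsub : K ⊆ circleSet \ E := connectedComponentIn_subset _ _
  have hxK : turn x ∈ K := mem_connectedComponentIn (harc (mem_image_of_mem _ hx))
  have hcover : K ⊆ U ∪ (turn '' Icc a b)ᶜ := by
    intro z hz
    by_cases hzI : z ∈ turn '' Icc a b
    · obtain ⟨s, hs, rfl⟩ := hzI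
      have hsa : s ≠ a := by rintro rfl; exact (hKsub hz).2 ha
      have hsb : s ≠ b := by rintro rfl; exact (hKsub hz).2 hb
      have hs' : s ∈ Ioo a b := ⟨lt_of_le_of_ne hs.1 hsa.symm, lt_of_le_of_ne hs.2 hsb⟩
      exact Or.inl (hUcircle.symm ▸ mem_image_of_mem turn hs' : turn s ∈ circleSet ∩ U).2
    · exact Or.inr hzI
  have hdisj : K ∩ (U ∩ (turn '' Icc a b)ᶜ) = ∅ := by
    refine eq_empty_of_forall_notMem fun z ⟨hzK, hzU, hzI⟩ => hzI ?_
    have : z ∈ turn '' Ioo a b := hUcircle ▸ ⟨(hKsub hzK).1, hzU⟩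
    exact image_mono Ioo_subset_Icc_self this
  rcases isPreconnected_iff_subset_of_disjoint.1 isPreconnected_connectedComponentIn U _
      (isOpen_exp_image_im_mem isOpen_Ioo)
      (isCompact_Icc.image continuous_turn).isClosed.isOpen_compl hcover hdisj with hKU | hKI
  · exact fun z hz => hUcircle ▸ ⟨(hKsub hz).1, hKU hz⟩
  · exact absurd (image_mono Ioo_subset_Icc_self (mem_image_of_mem turn hx)) (hKI hxK)

lemma len_turn_image_Ioo {a b : ℝ} (hab : a ≤ b) (hba : b ≤ a + 1) :
    len (turn '' Ioo a b) = b - a := by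
  have hpre : turn ⁻¹' (turn '' Ioo a b) ∩ Ioc a (a + 1) = Ioo a b := by
    ext x
    constructor
    · rintro ⟨⟨s, hs, hsx⟩, hx⟩
      rwa [← eq_of_turn_eq
        (abs_sub_lt_iff.2 ⟨by linarith [hs.2, hx.1], by linarith [hs.1, hx.2]⟩) hsx]
    · exact fun hx => ⟨mem_image_of_mem _ hx, hx.1, by linarith [hx.2]⟩
  rw [len, circleMeasure_eq_volume_preimage_turn (measurableSet_turn_image_Ioo a b) a, hpre,
    Real.volume_Ioo, ENNReal.toReal_ofReal (sub_nonneg.2 hab)]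

structure IsGap (B : Set ℝ) (a b : ℝ) : Prop where
  left_mem : a ∈ B
  right_mem : b ∈ B
  lt : a < b
  disjoint : Disjoint (Ioo a b) B

def gaps (B I : Set ℝ) : Set (ℝ × ℝ) := {p | IsGap B p.1 p.2 ∧ p.1 ∈ I}

section Gaps

variable {B : Set ℝ}

lemma IsGap.eq_of_mem {a b a' b' x : ℝ} (h : IsGap B a b) (h' : IsGap B a' b')
    (hx : x ∈ Ioo a b) (hx' : x ∈ Ioo a' b') : a = a' ∧ b = b' := by
  have key : ∀ {a b a' b'}, IsGap B a b → IsGap B a' b' → x ∈ Ioo a b → x ∈ Ioo a' b' →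
      a ≤ a' ∧ b' ≤ b := fun h h' hx hx' =>
    ⟨not_lt.1 fun hlt => h'.disjoint.notMem_of_mem_left ⟨hlt, hx.1.trans hx'.2⟩ h.left_mem,
      not_lt.1 fun hlt => h'.disjoint.notMem_of_mem_left ⟨hx'.1.trans hx.2, hlt⟩ h.right_mem⟩
  exact ⟨(key h h' hx hx').1.antisymm (key h' h hx' hx).1,
    (key h' h hx' hx).2.antisymm (key h h' hx hx').2⟩

lemma gaps_union (I J : Set ℝ) : gaps B (I ∪ J) = gaps B I ∪ gaps B J := by
  ext p
  simp only [gaps, mem_union, mem_ofPred_eq, and_or_left]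

lemma pairwiseDisjoint_gaps (I : Set ℝ) :
    (gaps B I).PairwiseDisjoint fun p => Ioo p.1 p.2 := fun _ hp _ hq hpq =>
  disjoint_left.2 fun _ hxp hxq => hpq (Prod.ext_iff.2 (hp.1.eq_of_mem hq.1 hxp hxq))

lemma countable_gaps (I : Set ℝ) : (gaps B I).Countable :=
  (pairwiseDisjoint_gaps I).countable_of_isOpen (fun _ _ => isOpen_Ioo)
    fun _ hp => nonempty_Ioo.2 hp.1.lt

lemma IsGap.add_int {a b : ℝ} (h : IsGap B a b) (hper : ∀ (x : ℝ) (z : ℤ), x + z ∈ B ↔ x ∈ B)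
    (z : ℤ) : IsGap B (a + z) (b + z) where
  left_mem := (hper a z).2 h.left_mem
  right_mem := (hper b z).2 h.right_mem
  lt := by linarith [h.lt]
  disjoint := disjoint_left.2 fun t ht htB =>
    h.disjoint.notMem_of_mem_left (a := t - z) ⟨by linarith [ht.1], by linarith [ht.2]⟩
      ((hper (t - z) z).1 (by rwa [sub_add_cancel]))

lemma IsGap.sub_le_one {a b : ℝ} (h : IsGap B a b)
    (hper : ∀ (x : ℝ) (z : ℤ), x + z ∈ B ↔ x ∈ B) : b - a ≤ 1 :=
  not_lt.1 fun hlt => h.disjoint.notMem_of_mem_left (a := a + (1 : ℤ))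
    ⟨by push_cast; linarith, by push_cast; linarith⟩ ((hper a 1).2 h.left_mem)

lemma exists_isGap_mem (hper : ∀ (x : ℝ) (z : ℤ), x + z ∈ B ↔ x ∈ B) (hB : IsClosed B)
    {s x : ℝ} (hs : s ∈ B) (hx : x ∉ B) :
    ∃ a b, IsGap B a b ∧ x ∈ Ioo a b := by
  have hlo : (B ∩ Iic x).Nonempty :=
    ⟨s + ⌊x - s⌋, (hper s _).2 hs, mem_Iic.2 (by linarith [Int.floor_le (x - s)])⟩
  have hhi : (B ∩ Ici x).Nonempty :=
    ⟨s + ⌈x - s⌉, (hper s _).2 hs, mem_Ici.2 (by linarith [Int.le_ceil (x - s)])⟩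
  have hlo_bdd : BddAbove (B ∩ Iic x) := bddAbove_Iic.mono inter_subset_right
  have hhi_bdd : BddBelow (B ∩ Ici x) := bddBelow_Ici.mono inter_subset_right
  have ha := (hB.inter isClosed_Iic).csSup_mem hlo hlo_bdd
  have hb := (hB.inter isClosed_Ici).csInf_mem hhi hhi_bdd
  have hax : sSup (B ∩ Iic x) < x := lt_of_le_of_ne ha.2 fun h => hx (h ▸ ha.1)
  have hxb : x < sInf (B ∩ Ici x) := lt_of_le_of_ne hb.2 fun h => hx (h ▸ hb.1)
  refine ⟨_, _, ⟨ha.1, hb.1, hax.trans hxb, disjoint_left.2 fun t ht htB => ?_⟩, hax, hxb⟩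
  rcases le_total t x with htx | hxt
  · exact (le_csSup hlo_bdd ⟨htB, htx⟩).not_gt ht.1
  · exact (csInf_le hhi_bdd ⟨htB, hxt⟩).not_gt ht.2

lemma tsum_gaps_length_le (hper : ∀ (x : ℝ) (z : ℤ), x + z ∈ B ↔ x ∈ B) (c d : ℝ) :
    ∑' p : gaps B (Ico c d), ENNReal.ofReal (p.1.2 - p.1.1) ≤ ENNReal.ofReal (d + 1 - c) := by
  calc ∑' p : gaps B (Ico c d), ENNReal.ofReal (p.1.2 - p.1.1)
      = ∑' p : gaps B (Ico c d), volume (Ioo p.1.1 p.1.2) := by simp only [Real.volume_Ioo]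
    _ = volume (⋃ p ∈ gaps B (Ico c d), Ioo p.1 p.2) :=
        (measure_biUnion (countable_gaps _) (pairwiseDisjoint_gaps _)
          fun _ _ => measurableSet_Ioo).symm
    _ ≤ volume (Icc c (d + 1)) := measure_mono <| iUnion₂_subset fun p hp =>
        Ioo_subset_Icc_self.trans
          (Icc_subset_Icc hp.2.1 (by linarith [hp.2.2, hp.1.sub_le_one hper]))
    _ = ENNReal.ofReal (d + 1 - c) := Real.volume_Icc

end Gaps

def unitNbhd (B : Set ℝ) (t : ℝ) : Set ℝ := {x ∈ Ioc 0 1 | ∃ s ∈ B, |x - s| ≤ t}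

lemma volume_Ioo_inter_near_ends_le (a b t : ℝ) :
    volume (Ioo a b ∩ (Ioc a (a + t) ∪ Ico (b - t) b)) ≤
      min (ENNReal.ofReal (b - a)) (2 * ENNReal.ofReal t) := by
  refine le_min ((measure_mono inter_subset_left).trans_eq Real.volume_Ioo)
    ((measure_mono inter_subset_right).trans ((measure_union_le _ _).trans_eq ?_))
  rw [Real.volume_Ioc, Real.volume_Ico, add_sub_cancel_left, sub_sub_cancel, two_mul]

lemma volume_unitNbhd_le {B : Set ℝ} (hper : ∀ (x : ℝ) (z : ℤ), x + z ∈ B ↔ x ∈ B)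
    (hB : IsClosed B) (hnull : volume (B ∩ Ioc 0 1) = 0) (t : ℝ) :
    volume (unitNbhd B t) ≤
      ∑' p : gaps B (Ico (-1) 1), min (ENNReal.ofReal (p.1.2 - p.1.1)) (2 * ENNReal.ofReal t) := by
  set nearEnds : ℝ × ℝ → Set ℝ := fun p => Ioo p.1 p.2 ∩ (Ioc p.1 (p.1 + t) ∪ Ico (p.2 - t) p.2)
  have hcover : unitNbhd B t ⊆ (B ∩ Ioc 0 1) ∪ ⋃ p ∈ gaps B (Ico (-1) 1), nearEnds p := by
    rintro x ⟨hx01, s, hs, hxs⟩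
    by_cases hxB : x ∈ B
    · exact Or.inl ⟨hxB, hx01⟩
    obtain ⟨a, b, hab, hx⟩ := exists_isGap_mem hper hB hs hxB
    have hs' : s ∉ Ioo a b := fun h => hab.disjoint.notMem_of_mem_left h hs
    have hlen := hab.sub_le_one hper
    rw [mem_Ioo, not_and_or, not_lt, not_lt] at hs'
    rw [abs_le] at hxs
    refine Or.inr (mem_biUnion (x := (a, b)) ⟨hab, ?_, ?_⟩ ⟨hx, ?_⟩)
    · linarith [hx.2, hx01.1]
    · linarith [hx.1, hx01.2]
    · rcases hs' with h | h
      · exact Or.inl ⟨hx.1, by linarith⟩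
      · exact Or.inr ⟨by linarith, hx.2⟩
  calc volume (unitNbhd B t)
      ≤ volume (B ∩ Ioc 0 1) + volume (⋃ p ∈ gaps B (Ico (-1) 1), nearEnds p) :=
        (measure_mono hcover).trans (measure_union_le _ _)
    _ ≤ ∑' p : gaps B (Ico (-1) 1), volume (nearEnds p) := by
        rw [hnull, zero_add]
        exact measure_biUnion_le volume (countable_gaps _) _
    _ ≤ _ := ENNReal.tsum_le_tsum fun p => volume_Ioo_inter_near_ends_le _ _ _

lemma ofReal_dyL (n : ℕ) : ENNReal.ofReal (dyL n) = 2⁻¹ ^ n := by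
  rw [dyL, ← inv_pow, ENNReal.ofReal_pow (by norm_num), ENNReal.ofReal_inv_of_pos two_pos,
    ENNReal.ofReal_ofNat]

/-- Summing `min (|I|, C 2⁻ⁿ)` over the generations `n` splits at `2⁻ᴺ ≈ |I|`: each of the first
`N ≈ log₂ (1/|I|)` terms is at most `|I|`, and the geometric tail is at most `2 C |I|`. -/
lemma tsum_min_dyL_le {l : ℝ} (hl : 0 < l) (hl1 : l ≤ 1) (C : ℝ≥0∞) :
    ∑' n, min (ENNReal.ofReal l) (C * ENNReal.ofReal (dyL n)) ≤
      ENNReal.ofReal (Real.log 2)⁻¹ * ENNReal.ofReal (l * Real.log (1 / l)) +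
        (1 + 2 * C) * ENNReal.ofReal l := by
  have hlog2 : 0 < Real.log 2 := Real.log_pos one_lt_two
  have hlog : 0 ≤ Real.log (1 / l) := Real.log_nonneg (one_le_one_div hl hl1)
  set N := ⌈Real.log (1 / l) / Real.log 2⌉₊
  have hN : (N : ℝ) < Real.log (1 / l) / Real.log 2 + 1 := Nat.ceil_lt_add_one (by positivity)
  have hdyL : dyL N ≤ l := by
    have : Real.log (1 / l) ≤ Real.log (2 ^ N) := by
      rw [Real.log_pow, ← div_le_iff₀ hlog2]
      exact Nat.le_ceil _
    rw [dyL, inv_le_comm₀ (by positivity) hl, ← one_div]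
    exact (Real.log_le_log_iff (by positivity) (by positivity)).1 this
  have hhead : ∑ n ∈ Finset.range N, min (ENNReal.ofReal l) (C * ENNReal.ofReal (dyL n)) ≤
      ENNReal.ofReal (Real.log 2)⁻¹ * ENNReal.ofReal (l * Real.log (1 / l)) + ENNReal.ofReal l :=
    calc _ ≤ ∑ n ∈ Finset.range N, ENNReal.ofReal l := Finset.sum_le_sum fun _ _ => min_le_left _ _
      _ = ENNReal.ofReal (N * l) := by
        rw [Finset.sum_const, Finset.card_range, nsmul_eq_mul, ENNReal.ofReal_mul (by positivity),
          ENNReal.ofReal_natCast]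
      _ ≤ ENNReal.ofReal ((Real.log 2)⁻¹ * (l * Real.log (1 / l)) + l) :=
        ENNReal.ofReal_le_ofReal ((mul_le_mul_of_nonneg_right hN.le hl.le).trans_eq (by ring))
      _ = _ := by rw [ENNReal.ofReal_add (by positivity) hl.le, ENNReal.ofReal_mul (by positivity)]
  have htail : ∑' n, min (ENNReal.ofReal l) (C * ENNReal.ofReal (dyL (n + N))) ≤
      2 * C * ENNReal.ofReal l :=
    calc _ ≤ ∑' n, C * ENNReal.ofReal (dyL N) * 2⁻¹ ^ n :=
          ENNReal.tsum_le_tsum fun n => (min_le_right _ _).trans_eq (by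
            rw [ofReal_dyL, ofReal_dyL, pow_add, mul_comm (2⁻¹ ^ n), mul_assoc])
      _ = 2 * C * ENNReal.ofReal (dyL N) := by
        rw [ENNReal.tsum_mul_left, ENNReal.tsum_geometric_two, mul_comm, mul_assoc]
      _ ≤ 2 * C * ENNReal.ofReal l := by gcongr
  calc ∑' n, min (ENNReal.ofReal l) (C * ENNReal.ofReal (dyL n))
      = ∑ n ∈ Finset.range N, min (ENNReal.ofReal l) (C * ENNReal.ofReal (dyL n)) +
          ∑' n, min (ENNReal.ofReal l) (C * ENNReal.ofReal (dyL (n + N))) :=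
        ENNReal.summable.sum_add_tsum_nat_add'.symm
    _ ≤ _ := (add_le_add hhead htail).trans_eq (by ring)

lemma tsum_volume_unitNbhd_le {B : Set ℝ} (hper : ∀ (x : ℝ) (z : ℤ), x + z ∈ B ↔ x ∈ B)
    (hB : IsClosed B) (hnull : volume (B ∩ Ioc 0 1) = 0) :
    ∑' n, volume (unitNbhd B (2 * dyL n)) ≤ ∑' p : gaps B (Ico (-1) 1),
      (ENNReal.ofReal (Real.log 2)⁻¹ *
          ENNReal.ofReal ((p.1.2 - p.1.1) * Real.log (1 / (p.1.2 - p.1.1))) +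
        9 * ENNReal.ofReal (p.1.2 - p.1.1)) := by
  have hfour : ∀ n, 2 * ENNReal.ofReal (2 * dyL n) = 4 * ENNReal.ofReal (dyL n) := fun n => by
    rw [ENNReal.ofReal_mul zero_le_two, ENNReal.ofReal_ofNat, ← mul_assoc]
    norm_num
  calc ∑' n, volume (unitNbhd B (2 * dyL n))
      ≤ ∑' n, ∑' p : gaps B (Ico (-1) 1),
          min (ENNReal.ofReal (p.1.2 - p.1.1)) (4 * ENNReal.ofReal (dyL n)) :=
        ENNReal.tsum_le_tsum fun n =>
          (volume_unitNbhd_le hper hB hnull _).trans_eq (by rw [hfour])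
    _ = ∑' p : gaps B (Ico (-1) 1), ∑' n,
          min (ENNReal.ofReal (p.1.2 - p.1.1)) (4 * ENNReal.ofReal (dyL n)) :=
        ENNReal.tsum_comm
    _ ≤ _ := ENNReal.tsum_le_tsum fun p =>
        (tsum_min_dyL_le (sub_pos.2 p.2.1.lt) (by linarith [p.2.1.sub_le_one hper]) 4).trans_eq
          (by norm_num)

lemma arc_eq_turn_image (a t : ℝ) :
    arc a t = turn '' Ico (a / (2 * π)) (a / (2 * π) + t) := by
  have hpi : (0 : ℝ) < 2 * π := by positivity
  have hIco :
      Ico a (a + 2 * π * t) = (fun x => 2 * π * x) '' Ico (a / (2 * π)) (a / (2 * π) + t) := by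
    rw [image_mul_left_Ico hpi, mul_add, mul_div_cancel₀ _ hpi.ne']
  rw [arc, hIco, image_image]
  rfl

def dyadicIco (n k : ℕ) : Set ℝ := Ico (k * dyL n) ((k + 1) * dyL n)

lemma dyadicArc_eq (n k : ℕ) : dyadicArc n k = turn '' dyadicIco n k := by
  rw [dyadicArc, arc_eq_turn_image, dyadicIco, dyA, dyL]
  congr 2 <;> field_simp

lemma doubleArc_eq (n k : ℕ) :
    doubleArc n k = turn '' Ico ((k - 1 / 2) * dyL n) ((k + 3 / 2) * dyL n) := by
  rw [doubleArc, arc_eq_turn_image, dyL]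
  congr 2 <;> field_simp; ring

lemma dyL_strictAnti : StrictAnti dyL := fun _ _ h =>
  inv_strictAnti₀ (by positivity) (pow_lt_pow_right₀ one_lt_two h)

lemma dyadicIco_subset_Ico {n k : ℕ} (hk : k < 2 ^ n) : dyadicIco n k ⊆ Ico 0 1 := by
  refine Ico_subset_Ico (by unfold dyL; positivity) ?_
  rw [dyL, ← div_eq_mul_inv, div_le_one (by positivity)]
  exact_mod_cast hk

lemma dyadicArc_subset_dyadicArc_iff {n k m j : ℕ} (hk : k < 2 ^ n) (hj : j < 2 ^ m) :
    dyadicArc n k ⊆ dyadicArc m j ↔ dyadicIco n k ⊆ dyadicIco m j := by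
  have hinj : InjOn turn (Ico 0 1) := fun x hx y hy =>
    eq_of_turn_eq (abs_sub_lt_iff.2 ⟨by linarith [hx.2, hy.1], by linarith [hx.1, hy.2]⟩)
  rw [dyadicArc_eq, dyadicArc_eq]
  exact hinj.image_subset_image_iff (dyadicIco_subset_Ico hk) (dyadicIco_subset_Ico hj)

lemma eq_of_dyadicIco_subset {n k m j : ℕ} (h : dyadicIco n k ⊆ dyadicIco m j) (hnm : n ≤ m) :
    n = m ∧ k = j := by
  have hL : ∀ n, 0 < dyL n := fun n => by unfold dyL; positivity
  rw [dyadicIco, dyadicIco, Ico_subset_Ico_iff (by nlinarith [hL n])] at h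
  obtain ⟨h1, h2⟩ := h
  have hmn : m ≤ n := dyL_strictAnti.le_iff_ge.1 (by nlinarith)
  obtain rfl := hnm.antisymm hmn
  have hjk : (j : ℝ) ≤ k := le_of_mul_le_mul_right h1 (hL n)
  have hkj : (k : ℝ) + 1 ≤ j + 1 := le_of_mul_le_mul_right h2 (hL n)
  exact ⟨rfl, by exact_mod_cast hjk.antisymm' (by linarith)⟩

lemma exists_maxGoodDy_superset {E : Set ℂ} {p : ℕ × ℕ} (hp : p ∈ goodDy E) :
    ∃ r ∈ maxGoodDy E, dyadicArc p.1 p.2 ⊆ dyadicArc r.1 r.2 := by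
  classical
  have hex : ∃ m j, (m, j) ∈ goodDy E ∧ dyadicArc p.1 p.2 ⊆ dyadicArc m j :=
    ⟨p.1, p.2, hp, subset_rfl⟩
  obtain ⟨j, hgood, hsub⟩ := Nat.find_spec hex
  refine ⟨(Nat.find hex, j), ⟨hgood, fun q hq hq_sub => ?_⟩, hsub⟩
  have hle : Nat.find hex ≤ q.1 := Nat.find_min' hex ⟨q.2, hq, hsub.trans hq_sub⟩
  obtain ⟨h1, h2⟩ :=
    eq_of_dyadicIco_subset ((dyadicArc_subset_dyadicArc_iff hgood.1 hq.1).1 hq_sub) hle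
  rw [h1, h2]

lemma exists_near_of_not_subset_maxGoodDy {E : Set ℂ} {n k : ℕ} (hk : k < 2 ^ n)
    (hbad : ¬ ∃ r ∈ maxGoodDy E, dyadicArc n k ⊆ dyadicArc r.1 r.2) :
    ∃ s ∈ turn ⁻¹' E, |s - (k + 1 / 2) * dyL n| ≤ dyL n := by
  have hnot : ¬ doubleArc n k ⊆ circleSet \ E := fun h =>
    hbad (exists_maxGoodDy_superset (p := (n, k)) ⟨hk, h⟩)
  rw [doubleArc_eq, image_subset_iff] at hnot
  obtain ⟨s, hs, hsE⟩ := not_subset.1 hnot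
  refine ⟨s, not_not.1 fun h => hsE ⟨turn_mem_circleSet s, h⟩, abs_le.2 ⟨?_, ?_⟩⟩
  · linarith [hs.1]
  · linarith [hs.2]

lemma tsum_near_le_volume_unitNbhd (B : Set ℝ) (n : ℕ) :
    ∑' _ : {k : ℕ | k < 2 ^ n ∧ ∃ s ∈ B, |s - (k + 1 / 2) * dyL n| ≤ dyL n},
      ENNReal.ofReal (dyL n) ≤ volume (unitNbhd B (2 * dyL n)) := by
  set S := {k : ℕ | k < 2 ^ n ∧ ∃ s ∈ B, |s - (k + 1 / 2) * dyL n| ≤ dyL n}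
  have hL : 0 < dyL n := by unfold dyL; positivity
  have hdisj : S.PairwiseDisjoint fun k : ℕ => Ioo (k * dyL n) ((k + 1) * dyL n) :=
    fun k _ j _ hkj => disjoint_left.2 fun x hx hx' => hkj <| by
      have h1 : (k : ℝ) < j + 1 := lt_of_mul_lt_mul_right (hx.1.trans hx'.2) hL.le
      have h2 : (j : ℝ) < k + 1 := lt_of_mul_lt_mul_right (hx'.1.trans hx.2) hL.le
      norm_cast at h1 h2
      omega
  calc ∑' _ : S, ENNReal.ofReal (dyL n)
      = ∑' k : S, volume (Ioo (k * dyL n) ((k + 1) * dyL n)) := by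
        simp only [Real.volume_Ioo, ← sub_mul, add_sub_cancel_left, one_mul]
    _ = volume (⋃ k ∈ S, Ioo (k * dyL n) ((k + 1) * dyL n)) :=
        (measure_biUnion S.to_countable hdisj fun _ _ => measurableSet_Ioo).symm
    _ ≤ volume (unitNbhd B (2 * dyL n)) := by
        refine measure_mono (iUnion₂_subset fun k ⟨hk, s, hs, hks⟩ x hx => ?_)
        have h01 := dyadicIco_subset_Ico hk (Ioo_subset_Ico_self hx)
        obtain ⟨hks₁, hks₂⟩ := abs_le.1 hks
        refine ⟨⟨(by positivity : (0 : ℝ) ≤ k * dyL n).trans_lt hx.1, h01.2.le⟩, s, hs,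
          abs_le.2 ⟨?_, ?_⟩⟩
        · linarith [hx.1]
        · linarith [hx.2]

lemma tsum_bad_le_tsum_volume_unitNbhd (E : Set ℂ) :
    (∑' p : {q : ℕ × ℕ // q.2 < 2 ^ q.1 ∧
        ¬ ∃ r ∈ maxGoodDy E, dyadicArc q.1 q.2 ⊆ dyadicArc r.1 r.2},
      ENNReal.ofReal (dyL p.1.1)) ≤ ∑' n, volume (unitNbhd (turn ⁻¹' E) (2 * dyL n)) := by
  set S := {q : ℕ × ℕ | q.2 < 2 ^ q.1 ∧
    ∃ s ∈ turn ⁻¹' E, |s - (q.2 + 1 / 2) * dyL q.1| ≤ dyL q.1}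
  calc _ ≤ ∑' q : S, ENNReal.ofReal (dyL q.1.1) :=
        ENNReal.tsum_mono_subtype (fun q : ℕ × ℕ => ENNReal.ofReal (dyL q.1))
          (t := S) fun q hq => ⟨hq.1, exists_near_of_not_subset_maxGoodDy hq.1 hq.2⟩
    _ = ∑' n, ∑' k : {k : ℕ | (n, k) ∈ S}, ENNReal.ofReal (dyL n) := by
        rw [tsum_subtype S fun q : ℕ × ℕ => ENNReal.ofReal (dyL q.1), ENNReal.tsum_prod']
        refine tsum_congr fun n => ?_
        rw [tsum_subtype {k | (n, k) ∈ S} fun _ => ENNReal.ofReal (dyL n)]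
        rfl
    _ ≤ _ := ENNReal.tsum_le_tsum fun n => tsum_near_le_volume_unitNbhd _ n

section GapsOfPreimage

variable {E : Set ℂ} {a b : ℝ}

lemma IsGap.turn_image_mem_components (h : IsGap (turn ⁻¹' E) a b) :
    turn '' Ioo a b ∈ components (circleSet \ E) := by
  have hfree : ∀ t ∈ Ioo a b, turn t ∉ E := fun _ ht => h.disjoint.notMem_of_mem_left ht
  have hmid : (a + b) / 2 ∈ Ioo a b := ⟨by linarith [h.lt], by linarith [h.lt]⟩
  exact ⟨turn ((a + b) / 2), ⟨turn_mem_circleSet _, hfree _ hmid⟩,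
    (connectedComponentIn_eq_turn_image h.left_mem h.right_mem hfree hmid).symm⟩

lemma IsGap.len_turn_image (h : IsGap (turn ⁻¹' E) a b) : len (turn '' Ioo a b) = b - a :=
  len_turn_image_Ioo h.lt.le (by linarith [h.sub_le_one (mem_preimage_turn_add_int E)])

lemma injOn_turn_image_gaps {c d : ℝ} (hcd : d ≤ c + 1) :
    InjOn (fun p : ℝ × ℝ => turn '' Ioo p.1 p.2) (gaps (turn ⁻¹' E) (Ico c d)) := by
  rintro p ⟨hp, hpc⟩ q ⟨hq, hqc⟩ himg
  have hmid : (q.1 + q.2) / 2 ∈ Ioo q.1 q.2 := ⟨by linarith [hq.lt], by linarith [hq.lt]⟩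
  obtain ⟨s, hs, hsq⟩ : turn ((q.1 + q.2) / 2) ∈ turn '' Ioo p.1 p.2 :=
    (show turn '' Ioo p.1 p.2 = turn '' Ioo q.1 q.2 from himg) ▸ mem_image_of_mem turn hmid
  obtain ⟨z, hz⟩ := turn_eq_turn_iff.1 hsq
  obtain ⟨h1, h2⟩ := (hp.add_int (mem_preimage_turn_add_int E) z).eq_of_mem hq
    ⟨by linarith [hs.1], by linarith [hs.2]⟩ hmid
  have hpq : p.1 = q.1 := eq_of_turn_eq
    (abs_sub_lt_iff.2 ⟨by linarith [hpc.2, hqc.1], by linarith [hpc.1, hqc.2]⟩)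
    (by rw [← h1, turn_add_int])
  exact Prod.ext hpq (by linarith)

lemma tsum_gaps_entropy_le {M : ℝ}
    (hM : ∀ F : Finset (Set ℂ), (↑F : Set (Set ℂ)) ⊆ components (circleSet \ E) →
      ∑ V ∈ F, len V * Real.log (1 / len V) ≤ M) {c d : ℝ} (hcd : d ≤ c + 1) :
    ∑' p : gaps (turn ⁻¹' E) (Ico c d),
      ENNReal.ofReal ((p.1.2 - p.1.1) * Real.log (1 / (p.1.2 - p.1.1))) ≤ ENNReal.ofReal M := by
  classical
  set Ψ : gaps (turn ⁻¹' E) (Ico c d) → Set ℂ := fun p => turn '' Ioo p.1.1 p.1.2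
  have hΨ : Function.Injective Ψ := fun p q h => Subtype.ext (injOn_turn_image_gaps hcd p.2 q.2 h)
  have hlen : ∀ p, len (Ψ p) = p.1.2 - p.1.1 := fun p => p.2.1.len_turn_image
  have hnonneg : ∀ p : gaps (turn ⁻¹' E) (Ico c d),
      0 ≤ (p.1.2 - p.1.1) * Real.log (1 / (p.1.2 - p.1.1)) := fun p =>
    mul_nonneg (sub_nonneg.2 p.2.1.lt.le) (Real.log_nonneg (one_le_one_div (sub_pos.2 p.2.1.lt)
      (p.2.1.sub_le_one (mem_preimage_turn_add_int E))))
  rw [ENNReal.tsum_eq_iSup_sum]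
  refine iSup_le fun F => ?_
  calc ∑ p ∈ F, ENNReal.ofReal ((p.1.2 - p.1.1) * Real.log (1 / (p.1.2 - p.1.1)))
      = ENNReal.ofReal (∑ p ∈ F, len (Ψ p) * Real.log (1 / len (Ψ p))) := by
        simp only [hlen]
        exact (ENNReal.ofReal_sum_of_nonneg fun p _ => hnonneg p).symm
    _ = ENNReal.ofReal (∑ V ∈ F.image Ψ, len V * Real.log (1 / len V)) := by
        rw [Finset.sum_image hΨ.injOn]
    _ ≤ ENNReal.ofReal M := ENNReal.ofReal_le_ofReal <| hM _ fun V hV => by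
        obtain ⟨p, -, rfl⟩ := Finset.mem_image.1 hV
        exact p.2.1.turn_image_mem_components

lemma tsum_gaps_entropy_lt_top (hent : FiniteEntropy E) :
    ∑' p : gaps (turn ⁻¹' E) (Ico (-1) 1),
      ENNReal.ofReal ((p.1.2 - p.1.1) * Real.log (1 / (p.1.2 - p.1.1))) < ⊤ := by
  obtain ⟨M, hM⟩ := hent
  rw [← Ico_union_Ico_eq_Ico (by norm_num : (-1 : ℝ) ≤ 0) zero_le_one, gaps_union]
  calc _ ≤ _ := ENNReal.tsum_union_le
        (fun p : ℝ × ℝ => ENNReal.ofReal ((p.2 - p.1) * Real.log (1 / (p.2 - p.1)))) _ _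
    _ ≤ ENNReal.ofReal M + ENNReal.ofReal M :=
        add_le_add (tsum_gaps_entropy_le hM (by norm_num)) (tsum_gaps_entropy_le hM (by norm_num))
    _ < ⊤ := by finiteness

end GapsOfPreimage

theorem sum_of_bad_dyadic_arcs_finite_general
    (E : Set ℂ) (hE : IsClosed E)
    (hzero : circleMeasure E = 0) (hent : FiniteEntropy E) :
    (∑' p : {q : ℕ × ℕ // q.2 < 2 ^ q.1 ∧
        ¬ ∃ r ∈ maxGoodDy E, dyadicArc q.1 q.2 ⊆ dyadicArc r.1 r.2},
      ENNReal.ofReal (dyL p.1.1)) < ⊤ := by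
  have hper := mem_preimage_turn_add_int E
  have hnull : volume (turn ⁻¹' E ∩ Ioc 0 1) = 0 := by
    rw [← zero_add (1 : ℝ), ← circleMeasure_eq_volume_preimage_turn hE.measurableSet, hzero]
  calc _ ≤ ∑' n, volume (unitNbhd (turn ⁻¹' E) (2 * dyL n)) :=
        tsum_bad_le_tsum_volume_unitNbhd E
    _ ≤ _ := tsum_volume_unitNbhd_le hper (hE.preimage continuous_turn) hnull
    _ < ⊤ := by
        rw [ENNReal.tsum_add, ENNReal.tsum_mul_left, ENNReal.tsum_mul_left]
        exact ENNReal.add_lt_top.2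
          ⟨ENNReal.mul_lt_top ENNReal.ofReal_lt_top (tsum_gaps_entropy_lt_top hent),
            ENNReal.mul_lt_top (by norm_num)
              ((tsum_gaps_length_le hper (-1) 1).trans_lt ENNReal.ofReal_lt_top)⟩

/-- estimate (9) in the proof of Theorem 1: if `E ⊆ 𝕋` is
closed with zero length and finite entropy, `G` is the family of maximal dyadic
arcs `J` with `2J ⊆ 𝕋 \ E`, and `F` is the family of dyadic arcs not contained
in any arc of `G`, then `Σ_{J ∈ F} |J| < ∞`. -/
theorem sum_of_bad_dyadic_arcs_finite
    (E : Set ℂ) (hE : IsClosed E) (hEc : E ⊆ circleSet)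
    (hzero : circleMeasure E = 0) (hent : FiniteEntropy E) :
    (∑' p : {q : ℕ × ℕ // q.2 < 2 ^ q.1 ∧
        ¬ ∃ r ∈ maxGoodDy E, dyadicArc q.1 q.2 ⊆ dyadicArc r.1 r.2},
      ENNReal.ofReal (dyL p.1.1)) < ⊤ :=
  sum_of_bad_dyadic_arcs_finite_general E hE hzero hent

end WEPPaper
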